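/- Let β > 0 and m = ⌊β⌋ + 1. There exist constants c, C > 0 (depending only on m and β) such that for all t, v > 0: |∫_0^∞ H_{m−1}((t+s)/(2v)) e^{−(t+s)²/(4v²)} s^{m−β−1} ds| ≤ C e^{−c t²/v²} v^{m−β}. -/

import Mathlib

/-!
Since `H_k(x) = 2^{k/2} He_k(√2 x)` with Mathlib's probabilists' polynomial `He_k`, and a
polynomial is `O(e^{ε x²})` for every `ε > 0`, we get `|H_k(x)| e^{-x²} ≤ C e^{-x²/2}`.
At `x = (t+s)/(2v)` this is `C e^{-(t+s)²/(8v²)} ≤ C e^{-t²/(8v²)} e^{-s²/(8v²)}` because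
`(t+s)² ≥ t² + s²`, and the remaining integral `∫₀^∞ s^{α-1} e^{-s²/(8v²)} ds` is
`Γ(α/2) (8v²)^{α/2} / 2`, with `α = m - β > 0`.
-/

open MeasureTheory Set

/-- The (physicists') Hermite polynomial function,
`H_k(r) = (−1)^k e^{r²} (d/dr)^k e^{−r²}`. -/
noncomputable def hermiteH (k : ℕ) (r : ℝ) : ℝ :=
  (-1) ^ k * Real.exp (r ^ 2) * iteratedDeriv k (fun s => Real.exp (-(s ^ 2))) r

open Real Polynomial

theorem hermiteH_eq_aeval_hermite (k : ℕ) (x : ℝ) :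
    hermiteH k x = √2 ^ k * aeval (√2 * x) (hermite k) := by
  have hgauss :
      (fun s : ℝ => exp (-(s ^ 2))) = fun s => (fun y => exp (-(y ^ 2 / 2))) (√2 * s) := by
    funext s
    simp only [mul_pow, sq_sqrt zero_le_two]
    ring_nf
  have hsmooth : ContDiff ℝ k fun y : ℝ => exp (-(y ^ 2 / 2)) := by fun_prop
  rw [hermiteH, hgauss, iteratedDeriv_comp_const_mul hsmooth, iteratedDeriv_eq_iterate]
  simp only [deriv_gaussian_eq_hermite_mul_gaussian, mul_pow, sq_sqrt zero_le_two]
  have hexp : exp (x ^ 2) * exp (-(2 * x ^ 2 / 2)) = 1 := by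
    rw [← exp_add]; ring_nf; exact exp_zero
  have hsign : (-1 : ℝ) ^ k * (-1) ^ k = 1 := by rw [← mul_pow]; norm_num
  linear_combination
    (√2 ^ k * aeval (√2 * x) (hermite k)) * ((-1) ^ k * (-1) ^ k * hexp + hsign)

theorem abs_pow_le_mul_exp_mul_sq {ε : ℝ} (hε : 0 < ε) (n : ℕ) (x : ℝ) :
    |x| ^ n ≤ (1 + n.factorial / ε ^ n) * exp (ε * x ^ 2) := by
  have hexp : 1 ≤ exp (ε * x ^ 2) := one_le_exp (by positivity)
  have hsq : |x| ^ n ≤ 1 + (x ^ 2) ^ n := by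
    rcases le_total |x| 1 with h | h
    · linarith [pow_le_one₀ (abs_nonneg x) h (n := n), pow_nonneg (sq_nonneg x) n]
    · calc |x| ^ n ≤ |x| ^ (2 * n) := pow_le_pow_right₀ h (by omega)
        _ ≤ 1 + (x ^ 2) ^ n := by rw [pow_mul, sq_abs]; linarith
  have htaylor : (x ^ 2) ^ n ≤ n.factorial / ε ^ n * exp (ε * x ^ 2) := by
    have := pow_div_factorial_le_exp _ (by positivity : 0 ≤ ε * x ^ 2) n
    rw [mul_pow, div_le_iff₀ (by positivity)] at this
    rw [div_mul_eq_mul_div, le_div_iff₀ (by positivity)]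
    linarith
  nlinarith [(by positivity : (0 : ℝ) ≤ n.factorial / ε ^ n)]

theorem Polynomial.exists_abs_eval_le_mul_exp_mul_sq (P : ℝ[X]) {ε : ℝ} (hε : 0 < ε) :
    ∃ C > 0, ∀ x, |P.eval x| ≤ C * exp (ε * x ^ 2) := by
  induction P using Polynomial.induction_on' with
  | add p q hp hq =>
    obtain ⟨C₁, hC₁, hp⟩ := hp
    obtain ⟨C₂, hC₂, hq⟩ := hq
    refine ⟨C₁ + C₂, by positivity, fun x => ?_⟩
    rw [eval_add, add_mul]
    exact (abs_add_le _ _).trans (add_le_add (hp x) (hq x))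
  | monomial n a =>
    refine ⟨|a| * (1 + n.factorial / ε ^ n) + 1, by positivity, fun x => ?_⟩
    rw [eval_monomial, abs_mul, abs_pow, add_mul, one_mul, mul_assoc]
    have := mul_le_mul_of_nonneg_left (abs_pow_le_mul_exp_mul_sq hε n x) (abs_nonneg a)
    linarith [exp_pos (ε * x ^ 2)]

theorem exists_abs_hermiteH_le_mul_exp (k : ℕ) :
    ∃ C > 0, ∀ x, |hermiteH k x| ≤ C * exp (x ^ 2 / 2) := by
  obtain ⟨C, hC, hP⟩ := ((hermite k).map (algebraMap ℤ ℝ)).exists_abs_eval_le_mul_exp_mul_sq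
    (by norm_num : (0 : ℝ) < 1 / 4)
  refine ⟨√2 ^ k * C, by positivity, fun x => ?_⟩
  have h := hP (√2 * x)
  rw [eval_map_algebraMap, mul_pow, sq_sqrt zero_le_two] at h
  calc |hermiteH k x| = √2 ^ k * |aeval (√2 * x) (hermite k)| := by
        rw [hermiteH_eq_aeval_hermite, abs_mul, abs_of_pos (by positivity)]
    _ ≤ √2 ^ k * (C * exp (1 / 4 * (2 * x ^ 2))) := by gcongr
    _ = √2 ^ k * C * exp (x ^ 2 / 2) := by ring_nf

theorem integral_rpow_mul_exp_neg_mul_sq_Ioi {α b : ℝ} (hα : 0 < α) (hb : 0 < b) :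
    ∫ s in Ioi (0 : ℝ), s ^ (α - 1) * exp (-b * s ^ 2)
      = b ^ (-α / 2) * Gamma (α / 2) / 2 := by
  have h := integral_rpow_mul_exp_neg_mul_rpow two_pos (by linarith : -1 < α - 1) hb
  simp_rw [rpow_two, sub_add_cancel] at h
  rw [h]
  ring

theorem abs_integral_Ioi_shifted_gaussian_mul_rpow_le {h : ℝ → ℝ} {C α : ℝ} (hα : 0 < α)
    (hh : ∀ x, |h x| ≤ C * exp (x ^ 2 / 2)) {t v : ℝ} (ht : 0 ≤ t) (hv : 0 < v) :
    |∫ s in Ioi (0 : ℝ),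
        h ((t + s) / (2 * v)) * exp (-((t + s) ^ 2) / (4 * v ^ 2)) * s ^ (α - 1)|
      ≤ C * 8 ^ (α / 2) * Gamma (α / 2) / 2 * exp (-(1 / 8) * t ^ 2 / v ^ 2) * v ^ α := by
  set b : ℝ := 1 / (8 * v ^ 2) with hb_def
  have hb : 0 < b := by positivity
  have hC : 0 ≤ C := nonneg_of_mul_nonneg_left ((abs_nonneg _).trans (hh 0)) (exp_pos _)
  set E := exp (-(1 / 8) * t ^ 2 / v ^ 2)
  have hpoint : ∀ s ∈ Ioi (0 : ℝ),
      ‖h ((t + s) / (2 * v)) * exp (-((t + s) ^ 2) / (4 * v ^ 2)) * s ^ (α - 1)‖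
        ≤ C * E * (s ^ (α - 1) * exp (-b * s ^ 2)) := by
    intro s (hs : 0 < s)
    have hhalf : exp (((t + s) / (2 * v)) ^ 2 / 2) * exp (-((t + s) ^ 2) / (4 * v ^ 2))
        = exp (-((t + s) ^ 2) / (8 * v ^ 2)) := by
      rw [← exp_add]; congr 1; field_simp; ring
    have hsplit : exp (-((t + s) ^ 2) / (8 * v ^ 2)) ≤ E * exp (-b * s ^ 2) := by
      have hcross : 0 ≤ 2 * t * s / (8 * v ^ 2) := by positivity
      have hexpand : -((t + s) ^ 2) / (8 * v ^ 2)
          = -(1 / 8) * t ^ 2 / v ^ 2 + -b * s ^ 2 - 2 * t * s / (8 * v ^ 2) := by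
        rw [hb_def]; field_simp; ring
      rw [← exp_add, exp_le_exp, hexpand]
      linarith
    calc ‖h ((t + s) / (2 * v)) * exp (-((t + s) ^ 2) / (4 * v ^ 2)) * s ^ (α - 1)‖
        = |h ((t + s) / (2 * v))| * exp (-((t + s) ^ 2) / (4 * v ^ 2)) * s ^ (α - 1) := by
          rw [Real.norm_eq_abs, abs_mul, abs_mul, abs_of_pos (exp_pos _),
            abs_of_nonneg (rpow_nonneg hs.le _)]
      _ ≤ C * exp (((t + s) / (2 * v)) ^ 2 / 2) * exp (-((t + s) ^ 2) / (4 * v ^ 2))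
            * s ^ (α - 1) := by gcongr; exact hh _
      _ = C * exp (-((t + s) ^ 2) / (8 * v ^ 2)) * s ^ (α - 1) := by rw [mul_assoc C, hhalf]
      _ ≤ C * (E * exp (-b * s ^ 2)) * s ^ (α - 1) := by gcongr
      _ = C * E * (s ^ (α - 1) * exp (-b * s ^ 2)) := by ring
  have hint : IntegrableOn (fun s => s ^ (α - 1) * exp (-b * s ^ 2)) (Ioi 0) :=
    integrableOn_rpow_mul_exp_neg_mul_sq hb (by linarith)
  have hbv : b ^ (-α / 2) = 8 ^ (α / 2) * v ^ α := by
    rw [hb_def, one_div, inv_rpow (by positivity), ← rpow_neg (by positivity), neg_div, neg_neg,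
      mul_rpow (by norm_num) (by positivity), ← rpow_natCast, ← rpow_mul hv.le]
    ring_nf
  rw [← Real.norm_eq_abs]
  calc _ ≤ ∫ s in Ioi (0 : ℝ), C * E * (s ^ (α - 1) * exp (-b * s ^ 2)) :=
        norm_integral_le_of_norm_le (hint.const_mul _)
          ((ae_restrict_iff' measurableSet_Ioi).mpr (.of_forall hpoint))
    _ = _ := by rw [integral_const_mul, integral_rpow_mul_exp_neg_mul_sq_Ioi hα hb, hbv]; ring

theorem stmt_4 (β : ℝ) (m : ℕ) (hm : m = Nat.floor β + 1) :
    ∃ c > (0 : ℝ), ∃ C > (0 : ℝ), ∀ t v : ℝ, 0 < t → 0 < v →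
      |∫ s in Ioi (0 : ℝ),
          hermiteH (m - 1) ((t + s) / (2 * v)) * Real.exp (-((t + s) ^ 2) / (4 * v ^ 2)) *
            s ^ ((m : ℝ) - β - 1)|
        ≤ C * Real.exp (-c * t ^ 2 / v ^ 2) * v ^ ((m : ℝ) - β) := by
  have hα : 0 < (m : ℝ) - β := by
    rw [hm]
    push_cast
    linarith [Nat.lt_floor_add_one β]
  have hΓ : 0 < Gamma (((m : ℝ) - β) / 2) := Gamma_pos_of_pos (half_pos hα)
  obtain ⟨C, hC, hH⟩ := exists_abs_hermiteH_le_mul_exp (m - 1)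
  refine ⟨1 / 8, by norm_num, C * 8 ^ (((m : ℝ) - β) / 2) * Gamma (((m : ℝ) - β) / 2) / 2,
    by positivity, fun t v ht hv => ?_⟩
  exact abs_integral_Ioi_shifted_gaussian_mul_rpow_le hα hH ht.le hv
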